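/- Let M ≥ 3 and let u_1, …, u_K be unit vectors in a real inner product space with |⟨u_i, u_j⟩| < 1/M for all i ≠ j, and K ≥ 2. For 1 ≤ i ≤ K−1 set λ_i = ⟨u_i, u_K⟩ and w_i = u_i − λ_i u_K. Then ‖w_i‖² > 1 − 1/M², and for all 1 ≤ i ≠ j ≤ K−1 the normalized vectors u_i' = w_i/‖w_i‖ satisfy |⟨u_i', u_j'⟩| < 1/(M−1). -/

import Mathlib

open scoped RealInnerProductSpace

/-
Projecting onto the orthogonal complement of the unit vector `e = u_K` replaces the Gram
entries by `⟪u_i, u_j⟫ - λ_i λ_j`. With `ε = 1/M`, the off-diagonal entries of the new Gram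
matrix are below `ε + ε²` in absolute value, while the squared norms exceed `1 - ε²`.
Normalizing therefore gives `|⟪u_i', u_j'⟫| < (ε + ε²) / (1 - ε²) = ε / (1 - ε) = 1/(M - 1)`.
-/

section

variable {E : Type*} [NormedAddCommGroup E] [InnerProductSpace ℝ E]

theorem inner_sub_inner_smul_of_inner_self_eq_one {e : E} (he : ⟪e, e⟫ = 1) (x y : E) :
    ⟪x - ⟪x, e⟫ • e, y - ⟪y, e⟫ • e⟫ = ⟪x, y⟫ - ⟪x, e⟫ * ⟪y, e⟫ := by
  simp only [inner_sub_left, inner_sub_right, real_inner_smul_left, real_inner_smul_right, he,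
    real_inner_comm e]
  ring

theorem abs_inner_inv_norm_smul (x y : E) :
    |⟪‖x‖⁻¹ • x, ‖y‖⁻¹ • y⟫| = |⟪x, y⟫| / (‖x‖ * ‖y‖) := by
  rw [real_inner_smul_left, real_inner_smul_right, abs_mul, abs_mul, abs_inv, abs_inv, abs_norm,
    abs_norm, div_eq_mul_inv, mul_inv]
  ring

end

theorem lt_mul_of_lt_sq_of_lt_sq {s p q : ℝ} (hp0 : 0 ≤ p) (hq0 : 0 ≤ q) (hp : s < p ^ 2)
    (hq : s < q ^ 2) : s < p * q := by
  rcases le_total p q with hpq | hqp <;> nlinarith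

theorem abs_sub_mul_div_lt {ε a b c p q : ℝ} (hε : ε < 1) (ha : |a| < ε) (hb : |b| < ε)
    (hc : |c| < ε) (hp0 : 0 ≤ p) (hq0 : 0 ≤ q) (hp : 1 - ε ^ 2 < p ^ 2) (hq : 1 - ε ^ 2 < q ^ 2) :
    |c - a * b| / (p * q) < ε / (1 - ε) := by
  have hε0 : 0 < ε := (abs_nonneg a).trans_lt ha
  have hnum : |c - a * b| < ε * (1 + ε) :=
    calc |c - a * b| ≤ |c| + |a| * |b| := (abs_sub _ _).trans_eq (by rw [abs_mul])
      _ < ε + ε * ε := add_lt_add hc (mul_lt_mul'' ha hb (abs_nonneg _) (abs_nonneg _))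
      _ = ε * (1 + ε) := by ring
  have hden : (1 - ε) * (1 + ε) < p * q :=
    lt_mul_of_lt_sq_of_lt_sq hp0 hq0 (by linarith) (by linarith)
  have hpos : 0 < (1 - ε) * (1 + ε) := by nlinarith
  rw [div_lt_div_iff₀ (hpos.trans hden) (sub_pos.2 hε)]
  calc |c - a * b| * (1 - ε) < ε * (1 + ε) * (1 - ε) := by nlinarith
    _ = ε * ((1 - ε) * (1 + ε)) := by ring
    _ < ε * (p * q) := by gcongr

theorem projection_step_general (E : Type*) [NormedAddCommGroup E] [InnerProductSpace ℝ E]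
    (M : ℕ) (hM : 3 ≤ M) (n : ℕ)
    (u : Fin (n + 1) → E)
    (hunit : ∀ i, ⟪u i, u i⟫ = (1 : ℝ))
    (horth : ∀ i j, i ≠ j → |⟪u i, u j⟫| < 1 / (M : ℝ))
    (lam : Fin n → ℝ) (hlam : ∀ i, lam i = ⟪u i.castSucc, u (Fin.last n)⟫)
    (w : Fin n → E) (hw : ∀ i, w i = u i.castSucc - lam i • u (Fin.last n)) :
    (∀ i, ‖w i‖ ^ 2 > 1 - 1 / (M : ℝ) ^ 2) ∧
      (∀ i j, i ≠ j →
        |⟪‖w i‖⁻¹ • w i, ‖w j‖⁻¹ • w j⟫| < 1 / ((M : ℝ) - 1)) := by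
  have hM3 : (3 : ℝ) ≤ M := by exact_mod_cast hM
  have hlam_lt : ∀ i, |lam i| < 1 / (M : ℝ) := fun i =>
    hlam i ▸ horth _ _ (Fin.castSucc_ne_last i)
  have hgram : ∀ i j, ⟪w i, w j⟫ = ⟪u i.castSucc, u j.castSucc⟫ - lam i * lam j := by
    intro i j
    rw [hw, hw, hlam, hlam]
    exact inner_sub_inner_smul_of_inner_self_eq_one (hunit _) _ _
  have hnorm : ∀ i, 1 - (1 / (M : ℝ)) ^ 2 < ‖w i‖ ^ 2 := by
    intro i
    rw [← real_inner_self_eq_norm_sq, hgram, hunit, ← sq]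
    have := sq_lt_sq' (neg_lt_of_abs_lt (hlam_lt i)) (lt_of_abs_lt (hlam_lt i))
    linarith
  refine ⟨fun i => by simpa only [one_div_pow] using hnorm i, fun i j hij => ?_⟩
  rw [abs_inner_inv_norm_smul, hgram]
  convert abs_sub_mul_div_lt (by rw [div_lt_one] <;> linarith) (hlam_lt i) (hlam_lt j)
    (horth _ _ (Fin.castSucc_injective n |>.ne hij)) (norm_nonneg _) (norm_nonneg _)
    (hnorm i) (hnorm j) using 1
  field_simp

theorem projection_step (E : Type*) [NormedAddCommGroup E] [InnerProductSpace ℝ E]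
    (M : ℕ) (hM : 3 ≤ M) (n : ℕ) (hn : 1 ≤ n)
    (u : Fin (n + 1) → E)
    (hunit : ∀ i, ⟪u i, u i⟫ = (1 : ℝ))
    (horth : ∀ i j, i ≠ j → |⟪u i, u j⟫| < 1 / (M : ℝ))
    (lam : Fin n → ℝ) (hlam : ∀ i, lam i = ⟪u i.castSucc, u (Fin.last n)⟫)
    (w : Fin n → E) (hw : ∀ i, w i = u i.castSucc - lam i • u (Fin.last n)) :
    (∀ i, ‖w i‖ ^ 2 > 1 - 1 / (M : ℝ) ^ 2) ∧
      (∀ i j, i ≠ j →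
        |⟪‖w i‖⁻¹ • w i, ‖w j‖⁻¹ • w j⟫| < 1 / ((M : ℝ) - 1)) :=
  projection_step_general E M hM n u hunit horth lam hlam w hw
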